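/- For all integers n ≥ 0, 0 ≤ μ ≤ 6n+3, and real θ with 0 ≤ θ ≤ 1/(3n+2), we have θ·sin(μθ)·∏_{k=0}^{n} cos((3k+1)θ) cos((3k+2)θ) ≥ μθ²·exp(−(6n+3)²θ²/3 − γθ²(6n³+18n²+17n+5)), where γ = −log(cos 1). -/

import Mathlib

/-!
The sine factor is bounded through `sin x ≥ x - x³/6 ≥ x e^{-x²/3}` on `[0, 2]`, the second
step being `e^{-t} ≤ 1 - t/2` for `t² ≤ 2`. Each cosine factor is bounded through
`cos x ≥ (cos 1)^{x²}` on `[-1, 1]`: this is the chord inequality for the concave function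
`t ↦ log (cos √t)`, whose derivative `-tan √t / (2√t)` is antitone because `tan s / s`
increases. Multiplying, the cosine exponents add up to
`θ² ∑ₖ ((3k+1)² + (3k+2)²) = θ² (6n³ + 18n² + 17n + 5)`.
-/

open Finset Real

lemma cos_pos_of_mem_Ioo_zero {x : ℝ} (hx : x ∈ Set.Ioo 0 (π / 2)) : 0 < cos x :=
  cos_pos_of_mem_Ioo ⟨by linarith [hx.1, pi_pos], hx.2⟩

lemma monotoneOn_tan_div_self : MonotoneOn (fun x => tan x / x) (Set.Ioo 0 (π / 2)) := by
  have hderiv : ∀ x ∈ Set.Ioo 0 (π / 2),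
      HasDerivAt (fun x => tan x / x) ((1 / cos x ^ 2 * x - tan x * 1) / x ^ 2) x :=
    fun x hx => (hasDerivAt_tan (cos_pos_of_mem_Ioo_zero hx).ne').div (hasDerivAt_id x) hx.1.ne'
  apply monotoneOn_of_deriv_nonneg (convex_Ioo _ _)
  · exact fun x hx => (hderiv x hx).continuousAt.continuousWithinAt
  · rw [interior_Ioo]
    exact fun x hx => (hderiv x hx).differentiableAt.differentiableWithinAt
  · rw [interior_Ioo]
    intro x hx
    rw [(hderiv x hx).deriv, tan_eq_sin_div_cos]
    have hc := cos_pos_of_mem_Ioo_zero hx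
    -- the numerator is `(x - sin x * cos x) / cos x ^ 2` and `sin x * cos x = sin (2 * x) / 2`
    have hsin : sin x * cos x ≤ x := by
      have := sin_le (by linarith [hx.1] : 0 ≤ 2 * x)
      rw [sin_two_mul] at this
      linarith
    have : 0 ≤ 1 / cos x ^ 2 * x - sin x / cos x * 1 := by
      rw [div_mul_eq_mul_div, one_mul, mul_one, sub_nonneg, div_le_div_iff₀ hc (by positivity)]
      nlinarith
    positivity

lemma sqrt_mem_Ioo_of_mem_Ioo {t : ℝ} (ht : t ∈ Set.Ioo 0 ((π / 2) ^ 2)) :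
    √t ∈ Set.Ioo 0 (π / 2) :=
  ⟨sqrt_pos.2 ht.1, (sqrt_lt' (by positivity)).2 ht.2⟩

lemma hasDerivAt_log_cos_sqrt {t : ℝ} (ht : t ∈ Set.Ioo 0 ((π / 2) ^ 2)) :
    HasDerivAt (fun t => log (cos √t)) (-(tan √t / √t) / 2) t := by
  have hs := sqrt_mem_Ioo_of_mem_Ioo ht
  have hc := cos_pos_of_mem_Ioo_zero hs
  have := (((hasDerivAt_sqrt ht.1.ne').cos).log hc.ne')
  convert this using 1
  rw [tan_eq_sin_div_cos]
  field_simp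

lemma concaveOn_log_cos_sqrt : ConcaveOn ℝ (Set.Ico 0 ((π / 2) ^ 2)) (fun t => log (cos √t)) := by
  apply AntitoneOn.concaveOn_of_deriv (convex_Ico _ _)
  · refine ContinuousOn.log (by fun_prop) fun t ht => (cos_pos_of_mem_Ioo ⟨?_, ?_⟩).ne'
    · linarith [sqrt_nonneg t, pi_pos]
    · exact (sqrt_lt' (by positivity)).2 ht.2
  · rw [interior_Ico]
    exact fun t ht => (hasDerivAt_log_cos_sqrt ht).differentiableAt.differentiableWithinAt
  · rw [interior_Ico]
    intro s hs t ht hst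
    rw [(hasDerivAt_log_cos_sqrt hs).deriv, (hasDerivAt_log_cos_sqrt ht).deriv]
    have := monotoneOn_tan_div_self (sqrt_mem_Ioo_of_mem_Ioo hs) (sqrt_mem_Ioo_of_mem_Ioo ht)
      (sqrt_le_sqrt hst)
    simp only at this
    linarith

lemma exp_log_cos_mul_sq_le_cos {a x : ℝ} (ha0 : 0 < a) (ha : a < π / 2) (hx : |x| ≤ a) :
    exp (log (cos a) * (x / a) ^ 2) ≤ cos x := by
  have hxa : (x / a) ^ 2 ≤ 1 := by
    rw [div_pow, div_le_one (by positivity)]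
    exact sq_le_sq' (abs_le.1 hx).1 (abs_le.1 hx).2
  -- `x ^ 2` is the convex combination of `0` and `a ^ 2` with weight `(x / a) ^ 2` on `a ^ 2`
  have hconc := concaveOn_log_cos_sqrt.2 (x := 0) (y := a ^ 2)
    ⟨le_rfl, by positivity⟩ ⟨by positivity, pow_lt_pow_left₀ ha ha0.le two_ne_zero⟩
    (sub_nonneg.2 hxa) (sq_nonneg _) (sub_add_cancel _ _)
  have hcx : 0 < cos x :=
    cos_pos_of_mem_Ioo ⟨by linarith [neg_abs_le x], by linarith [le_abs_self x]⟩
  simp only [smul_eq_mul, mul_zero, zero_add, sqrt_zero, cos_zero, log_one] at hconc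
  rw [div_pow, div_mul_cancel₀ _ (by positivity), sqrt_sq ha0.le, sqrt_sq_eq_abs, cos_abs] at hconc
  calc exp (log (cos a) * (x / a) ^ 2) ≤ exp (log (cos x)) :=
        exp_le_exp.2 (by rw [div_pow]; linarith)
    _ = cos x := exp_log hcx

lemma exp_log_cos_one_mul_sum_sq_le_prod_cos {ι : Type*} (s : Finset ι) (x : ι → ℝ)
    (hx : ∀ i ∈ s, |x i| ≤ 1) :
    exp (log (cos 1) * ∑ i ∈ s, x i ^ 2) ≤ ∏ i ∈ s, cos (x i) := by
  rw [mul_sum, exp_sum]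
  refine prod_le_prod (fun i _ => (exp_pos _).le) fun i hi => ?_
  simpa using exp_log_cos_mul_sq_le_cos one_pos (by linarith [pi_gt_three]) (hx i hi)

lemma exp_neg_le_one_sub_half {t : ℝ} (h0 : 0 ≤ t) (ht : t ^ 2 ≤ 2) : exp (-t) ≤ 1 - t / 2 := by
  rw [exp_neg, inv_le_iff_one_le_mul₀ (exp_pos t)]
  calc 1 ≤ (1 - t / 2) * (1 + t + t ^ 2 / 2) := by nlinarith
    _ ≤ (1 - t / 2) * exp t := by
      gcongr
      · nlinarith
      · exact quadratic_le_exp_of_nonneg h0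

lemma mul_exp_neg_sq_div_three_le_sin {x : ℝ} (h0 : 0 ≤ x) (h2 : x ≤ 2) :
    x * exp (-(x ^ 2 / 3)) ≤ sin x := by
  have hx2 : x ^ 2 ≤ 4 := by nlinarith
  calc x * exp (-(x ^ 2 / 3)) ≤ x * (1 - x ^ 2 / 3 / 2) :=
        mul_le_mul_of_nonneg_left (exp_neg_le_one_sub_half (by positivity) (by nlinarith)) h0
    _ = x - x ^ 3 / 6 := by ring
    _ ≤ sin x := sin_ge_sub_cube h0

lemma sum_range_sq_three_mul_add_one_add_sq_three_mul_add_two (n : ℕ) :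
    ∑ k ∈ range (n + 1), ((3 * k + 1 : ℝ) ^ 2 + (3 * k + 2) ^ 2) =
      6 * (n : ℝ) ^ 3 + 18 * n ^ 2 + 17 * n + 5 := by
  induction n with
  | zero => norm_num
  | succ m ih =>
    rw [sum_range_succ, ih]
    push_cast
    ring

lemma exp_log_cos_one_mul_le_prod_cos_mul_cos (n : ℕ) {θ : ℝ} (hθ0 : 0 ≤ θ)
    (hθ : (3 * n + 2) * θ ≤ 1) :
    exp (log (cos 1) * θ ^ 2 * (6 * n ^ 3 + 18 * n ^ 2 + 17 * n + 5)) ≤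
      ∏ k ∈ range (n + 1), (cos ((3 * k + 1) * θ) * cos ((3 * k + 2) * θ)) := by
  have hcos : ∀ c : ℝ, 0 ≤ c → c ≤ 2 →
      exp (log (cos 1) * ∑ k ∈ range (n + 1), ((3 * k + c) * θ) ^ 2) ≤
        ∏ k ∈ range (n + 1), cos ((3 * k + c) * θ) := by
    refine fun c hc0 hc2 => exp_log_cos_one_mul_sum_sq_le_prod_cos _ _ fun k hk => ?_
    have hkn : (k : ℝ) ≤ n := by exact_mod_cast Nat.lt_succ_iff.1 (mem_range.1 hk)
    rw [abs_of_nonneg (by positivity)]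
    nlinarith
  have h1 := hcos 1 zero_le_one one_le_two
  have h2 := hcos 2 zero_le_two le_rfl
  rw [prod_mul_distrib]
  calc exp (log (cos 1) * θ ^ 2 * (6 * n ^ 3 + 18 * n ^ 2 + 17 * n + 5))
      = exp (log (cos 1) * ∑ k ∈ range (n + 1), ((3 * k + 1) * θ) ^ 2) *
          exp (log (cos 1) * ∑ k ∈ range (n + 1), ((3 * k + 2) * θ) ^ 2) := by
        rw [← exp_add, ← mul_add, ← sum_add_distrib,
          ← sum_range_sq_three_mul_add_one_add_sq_three_mul_add_two, mul_assoc, mul_sum]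
        exact congrArg _ (congrArg _ (sum_congr rfl fun k _ => by ring))
    _ ≤ _ := mul_le_mul h1 h2 (exp_pos _).le ((exp_pos _).le.trans h1)

theorem borwein_integrand_lower_bound (n : ℕ) (μ : ℝ) (hμ0 : 0 ≤ μ)
    (hμ : μ ≤ 6 * n + 3) (θ : ℝ) (hθ0 : 0 ≤ θ) (hθ : θ ≤ 1 / (3 * n + 2)) :
    μ * θ ^ 2 *
        Real.exp (-(6 * n + 3) ^ 2 * θ ^ 2 / 3 -
          (-Real.log (Real.cos 1)) * θ ^ 2 *
            (6 * n ^ 3 + 18 * n ^ 2 + 17 * n + 5)) ≤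
      θ * Real.sin (μ * θ) *
        ∏ k ∈ Finset.range (n + 1),
          (Real.cos ((3 * k + 1) * θ) * Real.cos ((3 * k + 2) * θ)) := by
  have hθ1 : (3 * n + 2) * θ ≤ 1 := by rwa [le_div_iff₀ (by positivity), mul_comm] at hθ
  have hμθ : μ * θ ≤ (6 * n + 3) * θ := mul_le_mul_of_nonneg_right hμ hθ0
  have hsin := mul_exp_neg_sq_div_three_le_sin (mul_nonneg hμ0 hθ0) (by linarith)
  have hcos := exp_log_cos_one_mul_le_prod_cos_mul_cos n hθ0 hθ1
  have hgauss : exp (-(6 * n + 3) ^ 2 * θ ^ 2 / 3) ≤ exp (-((μ * θ) ^ 2 / 3)) := by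
    gcongr
    nlinarith [mul_nonneg hμ0 hθ0]
  calc μ * θ ^ 2 * exp (-(6 * n + 3) ^ 2 * θ ^ 2 / 3 -
          -log (cos 1) * θ ^ 2 * (6 * n ^ 3 + 18 * n ^ 2 + 17 * n + 5))
      = θ * (μ * θ * exp (-(6 * n + 3) ^ 2 * θ ^ 2 / 3)) *
          exp (log (cos 1) * θ ^ 2 * (6 * n ^ 3 + 18 * n ^ 2 + 17 * n + 5)) := by
        rw [sub_eq_add_neg, exp_add]
        ring_nf
    _ ≤ θ * (μ * θ * exp (-((μ * θ) ^ 2 / 3))) *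
          exp (log (cos 1) * θ ^ 2 * (6 * n ^ 3 + 18 * n ^ 2 + 17 * n + 5)) := by
        gcongr
    _ ≤ θ * sin (μ * θ) *
          ∏ k ∈ range (n + 1), (cos ((3 * k + 1) * θ) * cos ((3 * k + 2) * θ)) :=
        mul_le_mul (mul_le_mul_of_nonneg_left hsin hθ0) hcos (exp_pos _).le
          (mul_nonneg hθ0 ((by positivity : 0 ≤ μ * θ * exp _).trans hsin))
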